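/- Renormalization-group step for the one-dimensional Ising model: for all real K₀, K₁ there exist unique real numbers c > 0, K₀', K₁' such that the square of the transfer matrix T(K₀, K₁) = [[e^{K₁+K₀}, e^{−K₁}], [e^{−K₁}, e^{K₁−K₀}]] equals c · T(K₀', K₁'), i.e. T(K₀, K₁)² = c · [[e^{K₁'+K₀'}, e^{−K₁'}], [e^{−K₁'}, e^{K₁'−K₀'}]]. -/

import Mathlib

/-- The transfer matrix of the one-dimensional Ising model with nearest-neighbour
coupling `K₁` and field `K₀`. -/
noncomputable def transferMatrix (K₀ K₁ : ℝ) : Matrix (Fin 2) (Fin 2) ℝ :=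
  !![Real.exp (K₁ + K₀), Real.exp (-K₁);
     Real.exp (-K₁),     Real.exp (K₁ - K₀)]

/-!
Taking logarithms entrywise, `c • T(K₀', K₁')` has entries
`log c + K₁' + K₀'`, `log c - K₁'`, `log c + K₁' - K₀'`, an invertible linear function of
`(log c, K₀', K₁')`. Hence every symmetric 2 × 2 matrix with positive entries is `c • T(K₀', K₁')`
for exactly one triple with `c > 0`, and `T(K₀, K₁)²` is such a matrix.
-/

open Real

lemma Matrix.mul_apply_pos {l m n α : Type*} [Fintype m] [Nonempty m] [Semiring α]
    [PartialOrder α] [IsStrictOrderedRing α] {A : Matrix l m α} {B : Matrix m n α}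
    (hA : ∀ i j, 0 < A i j) (hB : ∀ i j, 0 < B i j) (i : l) (j : n) : 0 < (A * B) i j :=
  Finset.sum_pos (fun k _ => mul_pos (hA i k) (hB k j)) Finset.univ_nonempty

lemma mul_exp_eq_iff_log_add_eq {c t m : ℝ} (hc : 0 < c) (hm : 0 < m) :
    c * exp t = m ↔ log c + t = log m := by
  rw [← exp_eq_exp (x := log c + t), exp_add, exp_log hc, exp_log hm]

lemma transferMatrix_isSymm (K₀ K₁ : ℝ) : (transferMatrix K₀ K₁).IsSymm := by
  ext i j
  fin_cases i <;> fin_cases j <;> rfl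

lemma transferMatrix_pos (K₀ K₁ : ℝ) (i j : Fin 2) : 0 < transferMatrix K₀ K₁ i j := by
  fin_cases i <;> fin_cases j <;> simp [transferMatrix, exp_pos]

lemma eq_smul_transferMatrix_iff {M : Matrix (Fin 2) (Fin 2) ℝ} (hM : M.IsSymm) (c K₀ K₁ : ℝ) :
    M = c • transferMatrix K₀ K₁ ↔
      c * exp (K₁ + K₀) = M 0 0 ∧ c * exp (-K₁) = M 0 1 ∧ c * exp (K₁ - K₀) = M 1 1 := by
  constructor
  · rintro rfl
    simp [transferMatrix]
  · rintro ⟨h₀₀, h₀₁, h₁₁⟩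
    rw [M.eta_fin_two, hM.apply 0 1, ← h₀₀, ← h₀₁, ← h₁₁]
    simp [transferMatrix]

theorem existsUnique_eq_smul_transferMatrix {M : Matrix (Fin 2) (Fin 2) ℝ} (hM : M.IsSymm)
    (hpos : ∀ i j, 0 < M i j) :
    ∃! p : ℝ × ℝ × ℝ, 0 < p.1 ∧ M = p.1 • transferMatrix p.2.1 p.2.2 := by
  set a := log (M 0 0)
  set b := log (M 0 1)
  set d := log (M 1 1)
  have log_form : ∀ {c K₀ K₁ : ℝ}, 0 < c → (M = c • transferMatrix K₀ K₁ ↔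
      log c + (K₁ + K₀) = a ∧ log c + -K₁ = b ∧ log c + (K₁ - K₀) = d) := fun hc => by
    rw [eq_smul_transferMatrix_iff hM, mul_exp_eq_iff_log_add_eq hc (hpos 0 0),
      mul_exp_eq_iff_log_add_eq hc (hpos 0 1), mul_exp_eq_iff_log_add_eq hc (hpos 1 1)]
  refine ⟨(exp ((a + d + 2 * b) / 4), (a - d) / 2, (a + d - 2 * b) / 4), ⟨exp_pos _, ?_⟩, ?_⟩
  · rw [log_form (exp_pos _), log_exp]
    refine ⟨?_, ?_, ?_⟩ <;> ring
  · rintro ⟨c, K₀, K₁⟩ ⟨hc, hM_eq⟩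
    obtain ⟨h₀₀, h₀₁, h₁₁⟩ := (log_form hc).mp hM_eq
    have hlog : log c = (a + d + 2 * b) / 4 := by linarith
    simp only [Prod.mk.injEq]
    exact ⟨by rw [← hlog, exp_log hc], by linarith, by linarith⟩

/-- renormalization-group step for the 1D Ising model: for all real
`K₀, K₁` there exist unique `c > 0` and renormalized couplings `K₀', K₁'` such that
`T(K₀, K₁)² = c • T(K₀', K₁')`. The triple is packaged as `p = (c, K₀', K₁')`. -/
theorem rg_step_unique (K₀ K₁ : ℝ) :
    ∃! p : ℝ × ℝ × ℝ, 0 < p.1 ∧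
      (transferMatrix K₀ K₁) ^ 2 = p.1 • transferMatrix p.2.1 p.2.2 := by
  refine existsUnique_eq_smul_transferMatrix ((transferMatrix_isSymm K₀ K₁).pow 2) ?_
  rw [sq]
  exact Matrix.mul_apply_pos (transferMatrix_pos K₀ K₁) (transferMatrix_pos K₀ K₁)
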